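/- Let u : ℝ × ℝ^m → ℝ be smooth, everywhere positive, ℤ^m-periodic in the spatial variable, with ∂_t u = Δ_x u. Set f = −ln u and E(t) = ∫_{[0,1]^m} |∇f(t,x)|²·u(t,x) dx. Then E is differentiable and E'(t) = ∫_{[0,1]^m} ( −2(Δf)² + 3|∇f|²·Δf − |∇f|⁴ )·u dx for every t. -/

import Mathlib

open MeasureTheory
open scoped RealInnerProductSpace

noncomputable section

abbrev E (m : ℕ) := EuclideanSpace ℝ (Fin m)

/-- The standard orthonormal basis of `ℝ^m`. -/
def eE (m : ℕ) (a : Fin m) : E m := EuclideanSpace.single a 1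

/-- Second Fréchet derivative as a bilinear form. -/
def D2E (m : ℕ) (g : E m → ℝ) (x X Y : E m) : ℝ := iteratedFDeriv ℝ 2 g x ![X, Y]

/-- The Laplacian `Δg(x) = Σ_a D²g(x)[e_a, e_a]`. -/
def lapE (m : ℕ) (g : E m → ℝ) (x : E m) : ℝ := ∑ a, D2E m g x (eE m a) (eE m a)

/-- The unit cube `[0,1]^m`. -/
def cube (m : ℕ) : Set (E m) := {x | ∀ i, x i ∈ Set.Icc (0 : ℝ) 1}

/-- The vector of `ℤ^m ⊂ ℝ^m` with integer coordinates `k`. -/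
def latt (m : ℕ) (k : Fin m → ℤ) : E m := WithLp.toLp 2 (fun i => (k i : ℝ))

/-! With `u = exp (-f)` the heat equation `∂ₜu = Δu` becomes `∂ₜf = Δf - |∇f|²`. Differentiating
the energy density `|∇f|² u` in time and using this equation twice gives, pointwise,
`∂ₜ(|∇f|² u) = (-2 (Δf)² + 3 |∇f|² Δf - |∇f|⁴) u + 2 ∑ₐ ∂ₐ ((Δf - |∇f|²) u ∂ₐf)`.
The divergence terms integrate to zero over the unit cube by periodicity, and since the cube is
compact the time derivative may be taken under the integral. -/

open Set
open scoped ContDiff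

section DirDeriv

variable {G : Type*} [NormedAddCommGroup G] [NormedSpace ℝ G]

def dirDeriv (v : G) (φ : G → ℝ) (z : G) : ℝ := fderiv ℝ φ z v

variable {φ ψ : G → ℝ} {v w z : G}

theorem ContDiff.dirDeriv (hφ : ContDiff ℝ ∞ φ) (v : G) : ContDiff ℝ ∞ (dirDeriv v φ) :=
  (ContinuousLinearMap.apply ℝ ℝ v).contDiff.comp (hφ.fderiv_right le_rfl)

theorem dirDeriv_mul (hφ : DifferentiableAt ℝ φ z) (hψ : DifferentiableAt ℝ ψ z) :
    dirDeriv v (fun z => φ z * ψ z) z = dirDeriv v φ z * ψ z + φ z * dirDeriv v ψ z := by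
  simp [dirDeriv, fderiv_fun_mul hφ hψ]
  ring

theorem dirDeriv_sq (hφ : DifferentiableAt ℝ φ z) :
    dirDeriv v (fun z => φ z ^ 2) z = 2 * φ z * dirDeriv v φ z := by
  simp only [sq, dirDeriv_mul hφ hφ]
  ring

theorem dirDeriv_sum {ι : Type*} (s : Finset ι) {φ : ι → G → ℝ}
    (hφ : ∀ i ∈ s, DifferentiableAt ℝ (φ i) z) :
    dirDeriv v (fun z => ∑ i ∈ s, φ i z) z = ∑ i ∈ s, dirDeriv v (φ i) z := by
  simp [dirDeriv, fderiv_fun_sum hφ]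

theorem dirDeriv_neg : dirDeriv v (fun z => -φ z) z = -dirDeriv v φ z := by
  simp [dirDeriv, fderiv_fun_neg]

theorem dirDeriv_exp_neg (hφ : DifferentiableAt ℝ φ z) :
    dirDeriv v (fun z => Real.exp (-φ z)) z = -(Real.exp (-φ z) * dirDeriv v φ z) := by
  have h : HasFDerivAt (fun z => -φ z) (-fderiv ℝ φ z) z := hφ.hasFDerivAt.neg
  simp [dirDeriv, h.exp.fderiv]

theorem dirDeriv_dirDeriv (hφ : ContDiff ℝ 2 φ) :
    dirDeriv v (dirDeriv w φ) z = fderiv ℝ (fderiv ℝ φ) z v w := by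
  have hd : DifferentiableAt ℝ (fderiv ℝ φ) z :=
    (hφ.fderiv_right (m := 1) le_rfl).differentiable one_ne_zero z
  change fderiv ℝ (fun y => fderiv ℝ φ y w) z v = _
  simp [fderiv_clm_apply hd (differentiableAt_const w)]

theorem dirDeriv_comm (hφ : ContDiff ℝ 2 φ) :
    dirDeriv v (dirDeriv w φ) z = dirDeriv w (dirDeriv v φ) z := by
  rw [dirDeriv_dirDeriv hφ, dirDeriv_dirDeriv hφ]
  exact hφ.contDiffAt.isSymmSndFDerivAt (by simp) v w

theorem Function.Periodic.dirDeriv {c : G} (h : Function.Periodic φ c) (v : G) :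
    Function.Periodic (dirDeriv v φ) c := fun z => by
  rw [_root_.dirDeriv, ← fderiv_comp_add_right, h.funext]
  rfl

end DirDeriv

section HeatFlow

variable {G : Type*} [NormedAddCommGroup G] [NormedSpace ℝ G] {ι : Type*} [Fintype ι]

def gradNormSqAlong (e : ι → G) (φ : G → ℝ) (z : G) : ℝ := ∑ a, dirDeriv (e a) φ z ^ 2

def laplacianAlong (e : ι → G) (φ : G → ℝ) (z : G) : ℝ :=
  ∑ a, dirDeriv (e a) (dirDeriv (e a) φ) z

variable {τ : G} (e : ι → G) {φ : G → ℝ}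

theorem ContDiff.gradNormSqAlong (hφ : ContDiff ℝ ∞ φ) : ContDiff ℝ ∞ (gradNormSqAlong e φ) :=
  ContDiff.sum fun a _ => (hφ.dirDeriv (e a)).pow 2

theorem ContDiff.laplacianAlong (hφ : ContDiff ℝ ∞ φ) : ContDiff ℝ ∞ (laplacianAlong e φ) :=
  ContDiff.sum fun a _ => (hφ.dirDeriv (e a)).dirDeriv (e a)

theorem Function.Periodic.gradNormSqAlong {c : G} (h : Function.Periodic φ c) :
    Function.Periodic (gradNormSqAlong e φ) c := fun z => by
  simp only [_root_.gradNormSqAlong, h.dirDeriv _ z]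

theorem Function.Periodic.laplacianAlong {c : G} (h : Function.Periodic φ c) :
    Function.Periodic (laplacianAlong e φ) c := fun z => by
  simp only [_root_.laplacianAlong, (h.dirDeriv _).dirDeriv _ z]

variable {e}

theorem laplacianAlong_exp_neg (hφ : ContDiff ℝ ∞ φ) (z : G) :
    laplacianAlong e (fun z => Real.exp (-φ z)) z
      = Real.exp (-φ z) * (gradNormSqAlong e φ z - laplacianAlong e φ z) := by
  have hd : Differentiable ℝ φ := hφ.differentiable (by simp)
  have hdd : ∀ a, Differentiable ℝ (dirDeriv (e a) φ) :=
    fun a => (hφ.dirDeriv (e a)).differentiable (by simp)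
  have hfirst : ∀ a, dirDeriv (e a) (fun z => Real.exp (-φ z))
      = fun z => -(Real.exp (-φ z) * dirDeriv (e a) φ z) :=
    fun a => funext fun z => dirDeriv_exp_neg (hd z)
  simp only [_root_.laplacianAlong, _root_.gradNormSqAlong, hfirst, Finset.mul_sum,
    ← Finset.sum_sub_distrib]
  refine Finset.sum_congr rfl fun a _ => ?_
  have hexp : DifferentiableAt ℝ (fun z => Real.exp (-φ z)) z := by fun_prop
  rw [dirDeriv_neg, dirDeriv_mul hexp (hdd a z), dirDeriv_exp_neg (hd z)]
  ring

theorem dirDeriv_eq_of_heat (hφ : ContDiff ℝ ∞ φ)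
    (hheat : ∀ z, dirDeriv τ (fun z => Real.exp (-φ z)) z
      = laplacianAlong e (fun z => Real.exp (-φ z)) z) (z : G) :
    dirDeriv τ φ z = laplacianAlong e φ z - gradNormSqAlong e φ z := by
  have h := hheat z
  rw [dirDeriv_exp_neg (hφ.differentiable (by simp) z), laplacianAlong_exp_neg hφ] at h
  refine mul_left_cancel₀ (Real.exp_pos (-φ z)).ne' ?_
  linear_combination -h

theorem dirDeriv_gradNormSqAlong_mul_exp_neg (hφ : ContDiff ℝ ∞ φ)
    (hheat : ∀ z, dirDeriv τ (fun z => Real.exp (-φ z)) z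
      = laplacianAlong e (fun z => Real.exp (-φ z)) z) (z : G) :
    dirDeriv τ (fun z => gradNormSqAlong e φ z * Real.exp (-φ z)) z
      = (-2 * laplacianAlong e φ z ^ 2 + 3 * gradNormSqAlong e φ z * laplacianAlong e φ z
          - gradNormSqAlong e φ z ^ 2) * Real.exp (-φ z)
        + 2 * ∑ a, dirDeriv (e a) (fun z => (laplacianAlong e φ z - gradNormSqAlong e φ z)
          * Real.exp (-φ z) * dirDeriv (e a) φ z) z := by
  set S := gradNormSqAlong e φ
  set L := laplacianAlong e φ
  set U := fun z => Real.exp (-φ z)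
  set p := fun a => dirDeriv (e a) φ
  have hd : Differentiable ℝ φ := hφ.differentiable (by simp)
  have hp : ∀ a, ContDiff ℝ ∞ (p a) := fun a => hφ.dirDeriv (e a)
  have hS : ContDiff ℝ ∞ S := hφ.gradNormSqAlong e
  have hU : ContDiff ℝ ∞ U := by fun_prop
  have hLS : ContDiff ℝ ∞ (fun z => L z - S z) := (hφ.laplacianAlong e).sub hS
  have hφτ : dirDeriv τ φ = fun z => L z - S z := funext (dirDeriv_eq_of_heat hφ hheat)
  have hUτ : dirDeriv τ U z = -(U z * (L z - S z)) := by
    rw [dirDeriv_exp_neg (hd z), hφτ]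
  have hUa : ∀ a, dirDeriv (e a) U z = -(U z * p a z) := fun a => dirDeriv_exp_neg (hd z)
  have hSτ : dirDeriv τ S z = 2 * ∑ a, p a z * dirDeriv (e a) (fun z => L z - S z) z := by
    change dirDeriv τ (fun z => ∑ a, p a z ^ 2) z = _
    rw [dirDeriv_sum (φ := fun a z => p a z ^ 2) _
      fun a _ => ((hp a).pow 2).differentiable (by simp) z, Finset.mul_sum]
    refine Finset.sum_congr rfl fun a _ => ?_
    rw [dirDeriv_sq ((hp a).differentiable (by simp) z), dirDeriv_comm (hφ.of_le ENat.LEInfty.out),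
      hφτ]
    ring
  have hterm : ∀ a, dirDeriv (e a) (fun z => (L z - S z) * U z * p a z) z
      = U z * (p a z * dirDeriv (e a) (fun z => L z - S z) z)
        - (L z - S z) * U z * p a z ^ 2 + (L z - S z) * U z * dirDeriv (e a) (p a) z := by
    intro a
    rw [dirDeriv_mul ((hLS.mul hU).differentiable (by simp) z) ((hp a).differentiable (by simp) z),
      dirDeriv_mul (hLS.differentiable (by simp) z) (hU.differentiable (by simp) z), hUa]
    ring
  have hdiv : ∑ a, dirDeriv (e a) (fun z => (L z - S z) * U z * p a z) z
      = U z * ∑ a, p a z * dirDeriv (e a) (fun z => L z - S z) z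
        - (L z - S z) * U z * S z + (L z - S z) * U z * L z := by
    rw [Finset.sum_congr rfl fun a _ => hterm a, Finset.sum_add_distrib, Finset.sum_sub_distrib,
      ← Finset.mul_sum, ← Finset.mul_sum, ← Finset.mul_sum]
    rfl
  rw [dirDeriv_mul (hS.differentiable (by simp) z) (hU.differentiable (by simp) z), hSτ, hUτ,
    hdiv]
  ring

end HeatFlow

section Slices

variable {F : Type*} [NormedAddCommGroup F] [NormedSpace ℝ F] {φ : ℝ × F → ℝ}

theorem hasDerivAt_slice {t : ℝ} {x : F} (hφ : DifferentiableAt ℝ φ (t, x)) :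
    HasDerivAt (fun s => φ (s, x)) (dirDeriv (1, 0) φ (t, x)) t :=
  hφ.hasFDerivAt.comp_hasDerivAt t ((hasDerivAt_id t).prodMk (hasDerivAt_const t x))

theorem dirDeriv_slice (hφ : Differentiable ℝ φ) (t : ℝ) (v : F) :
    dirDeriv v (fun y => φ (t, y)) = fun y => dirDeriv (0, v) φ (t, y) := by
  funext y
  have h : HasFDerivAt (fun y : F => (t, y)) (ContinuousLinearMap.inr ℝ ℝ F) y :=
    (hasFDerivAt_const t y).prodMk (hasFDerivAt_id y)
  change fderiv ℝ (φ ∘ Prod.mk t) y v = _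
  rw [((hφ (t, y)).hasFDerivAt.comp y h).fderiv]
  rfl

end Slices

section Euclidean

variable {m : ℕ}

theorem D2E_eq_dirDeriv {g : E m → ℝ} (hg : ContDiff ℝ 2 g) (x X Y : E m) :
    D2E m g x X Y = dirDeriv X (dirDeriv Y g) x := by
  rw [D2E, iteratedFDeriv_two_apply, dirDeriv_dirDeriv hg]
  rfl

-- Along these directions of `ℝ × ℝ^m`, `gradNormSqAlong` and `laplacianAlong` are the spatial
-- `|∇ ·|²` and `Δ` of the time slices (`norm_gradient_slice_sq`, `lapE_slice`).
def spatialBasis (m : ℕ) (a : Fin m) : ℝ × E m := (0, eE m a)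

theorem lapE_slice {φ : ℝ × E m → ℝ} (hφ : ContDiff ℝ ∞ φ) (t : ℝ) (x : E m) :
    lapE m (fun y => φ (t, y)) x = laplacianAlong (spatialBasis m) φ (t, x) := by
  have hslice : ContDiff ℝ 2 (fun y => φ (t, y)) :=
    (hφ.comp (contDiff_const.prodMk contDiff_id)).of_le ENat.LEInfty.out
  refine Finset.sum_congr rfl fun a _ => ?_
  rw [D2E_eq_dirDeriv hslice, dirDeriv_slice (hφ.differentiable (by simp)),
    dirDeriv_slice ((hφ.dirDeriv _).differentiable (by simp))]
  rfl

theorem norm_gradient_sq_eq_sum (ψ : E m → ℝ) (x : E m) :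
    ‖gradient ψ x‖ ^ 2 = ∑ a, fderiv ℝ ψ x (eE m a) ^ 2 := by
  have hcoord : ∀ a, gradient ψ x a = fderiv ℝ ψ x (eE m a) := fun a => by
    rw [← toDual_gradient, InnerProductSpace.toDual_apply_apply, eE,
      EuclideanSpace.inner_single_right]
    simp
  rw [EuclideanSpace.norm_sq_eq]
  simp only [Real.norm_eq_abs, sq_abs, hcoord]

theorem norm_gradient_slice_sq {φ : ℝ × E m → ℝ} (hφ : Differentiable ℝ φ) (t : ℝ) (x : E m) :
    ‖gradient (fun y => φ (t, y)) x‖ ^ 2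
      = gradNormSqAlong (spatialBasis m) φ (t, x) := by
  rw [norm_gradient_sq_eq_sum]
  exact Finset.sum_congr rfl fun a _ => by rw [← dirDeriv, dirDeriv_slice hφ]; rfl

theorem latt_single (a : Fin m) : latt m (Pi.single a 1) = eE m a := by
  ext j
  by_cases h : j = a <;> simp [latt, eE, h]

end Euclidean

section Cube

variable {m : ℕ}

theorem cube_eq_preimage_Icc : cube m = WithLp.ofLp ⁻¹' Icc 0 1 := by
  ext x
  simp [cube, Pi.le_def, forall_and]

theorem isCompact_cube : IsCompact (cube m) := by
  rw [cube_eq_preimage_Icc]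
  exact (PiLp.homeomorph 2 (fun _ : Fin m => ℝ)).isCompact_preimage.2 isCompact_Icc

theorem measurableSet_cube : MeasurableSet (cube m) :=
  isCompact_cube.isClosed.measurableSet

theorem setIntegral_cube (g : E m → ℝ) :
    ∫ x in cube m, g x = ∫ y in Icc 0 1, g (WithLp.toLp 2 y) := by
  rw [← (PiLp.volume_preserving_toLp (Fin m)).setIntegral_preimage_emb
    (MeasurableEquiv.toLp 2 (Fin m → ℝ)).measurableEmbedding, cube_eq_preimage_Icc]
  rfl

-- Divergence theorem on the unit box; the two faces orthogonal to `a` cancel by periodicity.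
theorem integral_Icc_fderiv_eq_zero_of_periodic {W : (Fin m → ℝ) → ℝ} (hW : ContDiff ℝ 1 W)
    {a : Fin m} (hper : Function.Periodic W (Pi.single a 1)) :
    ∫ y in Icc 0 1, fderiv ℝ W y (Pi.single a 1) = 0 := by
  obtain ⟨n, rfl⟩ : ∃ n, m = n + 1 := ⟨m - 1, by have := a.pos; omega⟩
  have hd : Differentiable ℝ W := hW.differentiable one_ne_zero
  have hsum : ∀ y, ∑ i, Pi.single (M := fun _ => _) a (fderiv ℝ W) i y (Pi.single i 1)
      = fderiv ℝ W y (Pi.single a 1) := fun y => by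
    rw [Finset.sum_eq_single a] <;> simp +contextual
  have hdiv := integral_divergence_of_hasFDerivAt_off_countable' 0 1 zero_le_one
    (Pi.single a W) (Pi.single a (fderiv ℝ W)) ∅ countable_empty ?_ ?_ ?_
  · simp only [hsum] at hdiv
    rw [hdiv]
    refine Finset.sum_eq_zero fun i _ => ?_
    rcases eq_or_ne i a with rfl | hi
    · have hface : ∀ x : Fin n → ℝ, W (i.insertNth 1 x) = W (i.insertNth 0 x) := fun x => by
        have h := Fin.insertNth_sub_same (α := fun _ => ℝ) i 1 0 x
        rw [sub_zero] at h
        rw [← hper (i.insertNth 0 x), ← h, add_sub_cancel]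
      simp [hface]
    · simp [hi]
  · intro i
    rcases eq_or_ne i a with rfl | hi
    · simpa using hd.continuous.continuousOn
    · rw [Pi.single_eq_of_ne hi]
      exact continuousOn_const
  · intro y _ i
    rcases eq_or_ne i a with rfl | hi
    · simpa using (hd y).hasFDerivAt
    · rw [Pi.single_eq_of_ne hi, Pi.single_eq_of_ne hi]
      exact hasFDerivAt_const 0 y
  · simp only [hsum]
    exact ((hW.continuous_fderiv one_ne_zero).clm_apply continuous_const).integrableOn_Icc

theorem integral_cube_fderiv_eq_zero_of_periodic {w : E m → ℝ} (hw : ContDiff ℝ 1 w) {a : Fin m}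
    (hper : Function.Periodic w (eE m a)) : ∫ x in cube m, fderiv ℝ w x (eE m a) = 0 := by
  set L := (EuclideanSpace.equiv (Fin m) ℝ).symm
  have hL : L (Pi.single a 1) = eE m a := rfl
  have hfderiv : ∀ y, fderiv ℝ w (WithLp.toLp 2 y) (eE m a)
      = fderiv ℝ (w ∘ L) y (Pi.single a 1) := fun y => by
    rw [L.comp_right_fderiv]
    rfl
  rw [setIntegral_cube]
  simp only [hfderiv]
  refine integral_Icc_fderiv_eq_zero_of_periodic (hw.comp L.contDiff) fun y => ?_
  simp only [Function.comp_apply, map_add, hL]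
  exact hper (L y)

theorem integral_cube_dirDeriv_eq_zero_of_periodic {φ : ℝ × E m → ℝ} (hφ : ContDiff ℝ 1 φ)
    {a : Fin m} (hper : Function.Periodic φ (spatialBasis m a)) (t : ℝ) :
    ∫ x in cube m, dirDeriv (spatialBasis m a) φ (t, x) = 0 := by
  simp only [spatialBasis, ← congrFun (dirDeriv_slice (hφ.differentiable one_ne_zero) t (eE m a))]
  refine integral_cube_fderiv_eq_zero_of_periodic
    (hφ.comp (contDiff_const.prodMk contDiff_id)) fun y => ?_
  simpa [spatialBasis] using hper (t, y)

theorem integrableOn_cube_slice {φ : ℝ × E m → ℝ} (hφ : Continuous φ) (t : ℝ) :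
    IntegrableOn (fun x => φ (t, x)) (cube m) :=
  (hφ.comp (Continuous.prodMk_right t)).continuousOn.integrableOn_compact isCompact_cube

end Cube

section ParametricIntegral

variable {F : Type*} [NormedAddCommGroup F] [NormedSpace ℝ F] [MeasurableSpace F]
  [OpensMeasurableSpace F] {μ : Measure F}
  [IsFiniteMeasureOnCompacts μ] {K : Set F} {φ : ℝ × F → ℝ}

theorem hasDerivAt_setIntegral_of_contDiff (hK : IsCompact K) (hφ : ContDiff ℝ 1 φ) (t : ℝ) :
    HasDerivAt (fun s => ∫ x in K, φ (s, x) ∂μ)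
      (∫ x in K, dirDeriv ((1 : ℝ), (0 : F)) φ (t, x) ∂μ) t := by
  have hφ' : Continuous (dirDeriv ((1 : ℝ), (0 : F)) φ) :=
    (hφ.continuous_fderiv one_ne_zero).clm_apply continuous_const
  obtain ⟨C, hC⟩ := (isCompact_Icc.prod hK).exists_bound_of_continuousOn
    (f := dirDeriv ((1 : ℝ), (0 : F)) φ) (s := Icc (t - 1) (t + 1) ×ˢ K) hφ'.continuousOn
  refine (hasDerivAt_integral_of_dominated_loc_of_deriv_le (μ := μ.restrict K)
    (F := fun s x => φ (s, x)) (F' := fun s x => dirDeriv ((1 : ℝ), (0 : F)) φ (s, x))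
    (bound := fun _ => C)
    (Metric.ball_mem_nhds t one_pos) ?_ ?_ ?_ ?_ ?_ ?_).2
  · exact .of_forall fun s => (hφ.continuous.comp (Continuous.prodMk_right s)).aestronglyMeasurable
  · exact (hφ.continuous.comp (Continuous.prodMk_right t)).continuousOn.integrableOn_compact hK
  · exact (hφ'.comp (Continuous.prodMk_right t)).aestronglyMeasurable
  · rw [ae_restrict_iff' hK.measurableSet]
    refine .of_forall fun x hx s hs => hC (s, x) ⟨?_, hx⟩
    rw [Metric.mem_ball, Real.dist_eq, abs_lt] at hs
    constructor <;> linarith [hs.1, hs.2]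
  · exact integrableOn_const hK.measure_lt_top.ne
  · exact .of_forall fun x s _ => hasDerivAt_slice (hφ.differentiable one_ne_zero _)

end ParametricIntegral

section Energy

variable {m : ℕ} {Φ : ℝ × E m → ℝ}

theorem hasDerivAt_integral_cube_energy (hΦ : ContDiff ℝ ∞ Φ)
    (hper : ∀ a, Function.Periodic Φ (spatialBasis m a))
    (hheat : ∀ z, dirDeriv (1, 0) (fun z => Real.exp (-Φ z)) z
      = laplacianAlong (spatialBasis m) (fun z => Real.exp (-Φ z)) z) (t : ℝ) :
    HasDerivAt (fun s => ∫ x in cube m,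
        gradNormSqAlong (spatialBasis m) Φ (s, x) * Real.exp (-Φ (s, x)))
      (∫ x in cube m, (-2 * laplacianAlong (spatialBasis m) Φ (t, x) ^ 2
        + 3 * gradNormSqAlong (spatialBasis m) Φ (t, x)
          * laplacianAlong (spatialBasis m) Φ (t, x)
        - gradNormSqAlong (spatialBasis m) Φ (t, x) ^ 2) * Real.exp (-Φ (t, x))) t := by
  set e := spatialBasis m
  set V : Fin m → ℝ × E m → ℝ := fun a z =>
    (laplacianAlong e Φ z - gradNormSqAlong e Φ z) * Real.exp (-Φ z) * dirDeriv (e a) Φ z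
  have hS := (hΦ.gradNormSqAlong e).continuous
  have hL := (hΦ.laplacianAlong e).continuous
  have hV : ∀ a, ContDiff ℝ ∞ (V a) := fun a =>
    (((hΦ.laplacianAlong e).sub (hΦ.gradNormSqAlong e)).mul hΦ.neg.exp).mul (hΦ.dirDeriv _)
  have hVper : ∀ a, Function.Periodic (V a) (e a) := fun a =>
    ((((hper a).laplacianAlong e).sub ((hper a).gradNormSqAlong e)).mul
      ((hper a).comp fun r => Real.exp (-r))).mul ((hper a).dirDeriv _)
  have hflux : ∀ a, IntegrableOn (fun x => dirDeriv (e a) (V a) (t, x)) (cube m) := fun a =>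
    integrableOn_cube_slice ((hV a).dirDeriv (e a)).continuous t
  have hdensity := integrableOn_cube_slice (φ := fun z => (-2 * laplacianAlong e Φ z ^ 2
    + 3 * gradNormSqAlong e Φ z * laplacianAlong e Φ z - gradNormSqAlong e Φ z ^ 2)
    * Real.exp (-Φ z)) (by fun_prop) t
  convert hasDerivAt_setIntegral_of_contDiff (μ := volume) isCompact_cube
    (((hΦ.gradNormSqAlong e).mul hΦ.neg.exp).of_le (by simp)) t using 1
  rw [setIntegral_congr_fun measurableSet_cube
      fun x _ => dirDeriv_gradNormSqAlong_mul_exp_neg hΦ hheat (t, x),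
    integral_add hdensity ((integrable_finsetSum _ fun a _ => hflux a).const_mul 2),
    integral_const_mul, integral_finsetSum _ fun a _ => hflux a,
    Finset.sum_eq_zero fun a _ =>
      integral_cube_dirDeriv_eq_zero_of_periodic ((hV a).of_le (by simp)) (hVper a) t,
    mul_zero, add_zero]

end Energy

/-- for a positive periodic solution of the heat equation,
`E'(t) = ∫ (−2(Δf)² + 3|∇f|²Δf − |∇f|⁴) u` where `f = −ln u`. -/
theorem energy_deriv_formula (m : ℕ) (u : ℝ → E m → ℝ)
    (hu : ContDiff ℝ (⊤ : ℕ∞) (Function.uncurry u)) (hpos : ∀ t x, 0 < u t x)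
    (hper : ∀ (t : ℝ) (x : E m) (k : Fin m → ℤ), u t (x + latt m k) = u t x)
    (hheat : ∀ t x, deriv (fun s => u s x) t = lapE m (u t) x)
    (f : ℝ → E m → ℝ) (hf : f = fun t x => -Real.log (u t x))
    (Ent : ℝ → ℝ)
    (hE : Ent = fun t => ∫ x in cube m, ‖gradient (f t) x‖ ^ 2 * u t x)
    (t : ℝ) :
    HasDerivAt Ent
      (∫ x in cube m,
        (-2 * (lapE m (f t) x) ^ 2 + 3 * ‖gradient (f t) x‖ ^ 2 * lapE m (f t) x
          - ‖gradient (f t) x‖ ^ 4) * u t x) t := by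
  set Φ : ℝ × E m → ℝ := fun z => -Real.log (Function.uncurry u z)
  have hΦ : ContDiff ℝ ∞ Φ := (hu.log fun z => (hpos z.1 z.2).ne').neg
  have hexp : (fun z => Real.exp (-Φ z)) = Function.uncurry u := funext fun z => by
    simp only [Φ, neg_neg]
    exact Real.exp_log (hpos z.1 z.2)
  have hu' : ∀ s x, u s x = Real.exp (-Φ (s, x)) := fun s x => (congrFun hexp (s, x)).symm
  have hUper : ∀ a, Function.Periodic (Function.uncurry u) (spatialBasis m a) := by
    rintro a ⟨s, x⟩
    simpa [spatialBasis, latt_single] using hper s x (Pi.single a 1)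
  have hheat' : ∀ z, dirDeriv (1, 0) (fun z => Real.exp (-Φ z)) z
      = laplacianAlong (spatialBasis m) (fun z => Real.exp (-Φ z)) z := by
    rintro ⟨s, x⟩
    rw [hexp, ← (hasDerivAt_slice (hu.differentiable (by simp) _)).deriv, ← lapE_slice hu]
    exact hheat s x
  have hf' : ∀ s, f s = fun x => Φ (s, x) := fun s => by subst hf; rfl
  have hpow : ∀ r : ℝ, r ^ 4 = (r ^ 2) ^ 2 := fun r => by ring
  subst hE
  simp only [hf', hpow, norm_gradient_slice_sq (hΦ.differentiable (by simp)), lapE_slice hΦ, hu']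
  exact hasDerivAt_integral_cube_energy hΦ (fun a => (hUper a).comp fun r => -Real.log r) hheat' t
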